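/- Let u : B_1(0) ⊂ ℝ^n → ℝ be Lipschitz. Then there is a constant C depending only on n such that ‖u‖_{L^∞(B_1)} ≤ C · max{ ‖u‖_{L^1(B_1)}^{1/(n+1)} · ‖∇u‖_{L^∞(B_1)}^{n/(n+1)}, ‖u‖_{L^1(B_1)} }. -/

import Mathlib

open MeasureTheory Metric Set Filter
noncomputable section

/-- **Interpolation between `L¹` and Lipschitz.**
If `u : B₁(0) ⊂ ℝⁿ → ℝ` is Lipschitz (with constant `K`, playing the role of
`‖∇u‖_{L^∞(B₁)}`), then
`‖u‖_{L^∞(B₁)} ≤ C · max{ ‖u‖_{L¹(B₁)}^{1/(n+1)} · K^{n/(n+1)}, ‖u‖_{L¹(B₁)} }`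
for a constant `C` depending only on `n`. -/
theorem stmt_0 (n : ℕ) :
    ∃ C > (0 : ℝ), ∀ (u : EuclideanSpace ℝ (Fin n) → ℝ) (K : NNReal),
      LipschitzOnWith K u (ball (0 : EuclideanSpace ℝ (Fin n)) 1) →
      ∀ x ∈ ball (0 : EuclideanSpace ℝ (Fin n)) 1,
        |u x| ≤ C * max
          ((∫ y in ball (0 : EuclideanSpace ℝ (Fin n)) 1, |u y|) ^ ((1 : ℝ) / (n + 1)) *
            (K : ℝ) ^ ((n : ℝ) / (n + 1)))
          (∫ y in ball (0 : EuclideanSpace ℝ (Fin n)) 1, |u y|) := by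
  have hV : volume (ball (0 : EuclideanSpace ℝ (Fin n)) 1) ≠ ⊤ := measure_ball_lt_top.ne
  set c0 : ℝ := (volume (ball (0 : EuclideanSpace ℝ (Fin n)) 1)).toReal with hc0
  have hc0pos : 0 < c0 := ENNReal.toReal_pos (measure_ball_pos _ _ one_pos).ne' hV
  set A : ℝ := 2 * 4 ^ n / c0 with hA
  have hApos : 0 < A := by positivity
  refine ⟨max A (A ^ ((1:ℝ)/(n+1))), lt_max_of_lt_left hApos, ?_⟩
  intro u K hu x hx
  set I : ℝ := ∫ y in ball (0 : EuclideanSpace ℝ (Fin n)) 1, |u y| with hIdef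
  have hI0 : 0 ≤ I := integral_nonneg fun y => abs_nonneg _
  set M : ℝ := |u x| with hMdef
  have hM0 : 0 ≤ M := abs_nonneg _
  have hCmax : 0 < max A (A ^ ((1:ℝ)/(n+1))) := lt_max_of_lt_left hApos
  rcases hM0.eq_or_lt with hM | hM
  · refine le_trans hM.symm.le ?_
    exact mul_nonneg hCmax.le (le_trans hI0 (le_max_right _ _))
  -- integrability
  have hintu : IntegrableOn u (ball (0 : EuclideanSpace ℝ (Fin n)) 1) volume := by
    refine ⟨hu.continuousOn.aestronglyMeasurable measurableSet_ball, ?_⟩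
    refine HasFiniteIntegral.restrict_of_bounded (C := M + (K : ℝ) * 2) measure_ball_lt_top ?_
    rw [ae_restrict_iff' measurableSet_ball]
    refine Eventually.of_forall fun y hy => ?_
    have hd : dist (u x) (u y) ≤ (K : ℝ) * dist x y := hu.dist_le_mul x hx y hy
    have hdist : dist x y ≤ 2 := by
      have h1 := mem_ball_zero_iff.1 hx
      have h2 := mem_ball_zero_iff.1 hy
      calc dist x y ≤ ‖x‖ + ‖y‖ := dist_le_norm_add_norm x y
        _ ≤ 2 := by linarith
    have : ‖u y‖ - ‖u x‖ ≤ dist (u x) (u y) := by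
      rw [dist_comm, dist_eq_norm]; exact norm_sub_norm_le _ _ |>.trans_eq rfl
    have hKd : (K : ℝ) * dist x y ≤ (K : ℝ) * 2 :=
      mul_le_mul_of_nonneg_left hdist K.coe_nonneg
    have : ‖u y‖ ≤ ‖u x‖ + (K : ℝ) * 2 := by linarith
    simpa [hMdef, Real.norm_eq_abs] using this
  have hint : IntegrableOn (fun y => |u y|) (ball (0 : EuclideanSpace ℝ (Fin n)) 1) volume :=
    hintu.abs
  -- key estimate
  have key : ∀ r : ℝ, 0 < r → r ≤ 1 → (K : ℝ) * r ≤ M / 2 →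
      M / 2 * ((r / 2) ^ n * c0) ≤ I := by
    intro r hr0 hr1 hKr
    set c : EuclideanSpace ℝ (Fin n) := (1 - r / 2) • x with hc
    have hxnorm : ‖x‖ < 1 := mem_ball_zero_iff.1 hx
    have hcx : dist c x = r / 2 * ‖x‖ := by
      rw [dist_eq_norm, hc]
      have h0 : (1 - r / 2) • x - x = (-(r / 2)) • x := by
        rw [show x = (1:ℝ) • x from (one_smul ℝ x).symm, smul_smul, ← sub_smul]
        norm_num
      rw [h0, norm_smul, Real.norm_eq_abs, abs_neg, abs_of_pos (by linarith : (0:ℝ) < r / 2)]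
    have hSsub : ball c (r / 2) ⊆ ball (0 : EuclideanSpace ℝ (Fin n)) 1 := by
      intro y hy
      rw [mem_ball_zero_iff]
      have h1 : dist y c < r / 2 := mem_ball.1 hy
      have h2 : ‖c‖ = (1 - r / 2) * ‖x‖ := by
        rw [hc, norm_smul]; simp [abs_of_nonneg (by linarith : (0:ℝ) ≤ 1 - r / 2)]
      have : ‖y‖ ≤ dist y c + ‖c‖ := by
        rw [dist_eq_norm]
        calc ‖y‖ = ‖(y - c) + c‖ := by rw [sub_add_cancel]
          _ ≤ ‖y - c‖ + ‖c‖ := norm_add_le _ _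
      have hr2 : (0:ℝ) < 1 - r / 2 := by linarith
      nlinarith
    have hSx : ∀ y ∈ ball c (r / 2), dist x y < r := by
      intro y hy
      have h1 : dist y c < r / 2 := mem_ball.1 hy
      have h2 : dist c x ≤ r / 2 * ‖x‖ := hcx.le
      calc dist x y ≤ dist x c + dist c y := dist_triangle _ _ _
        _ = dist c x + dist y c := by rw [dist_comm x c, dist_comm c y]
        _ < r / 2 * ‖x‖ + r / 2 := by linarith [hcx]
        _ ≤ r := by nlinarith
    have hpt : ∀ y ∈ ball c (r / 2), M / 2 ≤ |u y| := by
      intro y hy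
      have hyB := hSsub hy
      have hd : dist (u x) (u y) ≤ (K : ℝ) * dist x y := hu.dist_le_mul x hx y hyB
      have hdr : (K : ℝ) * dist x y ≤ (K : ℝ) * r :=
        mul_le_mul_of_nonneg_left (hSx y hy).le K.coe_nonneg
      have habs : M - |u y| ≤ dist (u x) (u y) := by
        rw [dist_eq_norm, hMdef]
        have := abs_sub_abs_le_abs_sub (u x) (u y)
        simpa using this
      linarith
    have hvol : (volume (ball c (r / 2))).toReal = (r / 2) ^ n * c0 := by
      rw [Measure.addHaar_ball_of_pos _ _ (by linarith : (0:ℝ) < r / 2),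
        finrank_euclideanSpace_fin, ENNReal.toReal_mul, ENNReal.toReal_ofReal (by positivity)]
    calc M / 2 * ((r / 2) ^ n * c0) = M / 2 * (volume (ball c (r / 2))).toReal := by rw [hvol]
      _ ≤ ∫ y in ball c (r / 2), |u y| := by
          refine setIntegral_ge_of_const_le_real measurableSet_ball measure_ball_lt_top.ne hpt ?_
          exact hint.mono_set hSsub
      _ ≤ I := by
          refine setIntegral_mono_set hint ?_ (HasSubset.Subset.eventuallyLE hSsub)
          exact Eventually.of_forall fun y => abs_nonneg _
  rcases lt_or_ge ((K : ℝ) * 2) M with hcase | hcase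
  · -- r = 1
    have h1 := key 1 one_pos le_rfl (by linarith)
    -- M / 2 * ((1/2)^n * c0) ≤ I  ⇒  M ≤ 2^(n+1)/c0 * I ≤ A * I
    have hMle : M ≤ A * I := by
      rw [hA, div_mul_eq_mul_div, le_div_iff₀ hc0pos]
      have h2 : ((1:ℝ)/2) ^ n = 1 / 2 ^ n := by rw [div_pow, one_pow]
      rw [h2] at h1
      have h2n : (0:ℝ) < 2 ^ n := by positivity
      have := mul_le_mul_of_nonneg_right h1 (by positivity : (0:ℝ) ≤ 2 * 2 ^ n)
      have he : M / 2 * (1 / 2 ^ n * c0) * (2 * 2 ^ n) = M * c0 := by field_simp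
      rw [he] at this
      have h4 : (2:ℝ) * 2 ^ n ≤ 2 * 4 ^ n := by
        have : (2:ℝ) ^ n ≤ 4 ^ n := pow_le_pow_left₀ (by norm_num) (by norm_num) n
        linarith
      nlinarith
    calc M ≤ A * I := hMle
      _ ≤ max A (A ^ ((1:ℝ)/(n+1))) * max ((I : ℝ) ^ ((1:ℝ)/(n+1)) * (K : ℝ) ^ ((n:ℝ)/(n+1))) I := by
          exact mul_le_mul (le_max_left _ _) (le_max_right _ _) hI0 hCmax.le
  · -- r = M/(2K)
    have hKpos : (0:ℝ) < (K : ℝ) := by nlinarith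
    set r : ℝ := M / (2 * K) with hrdef
    have hr0 : 0 < r := by positivity
    have hr1 : r ≤ 1 := by rw [hrdef, div_le_one (by positivity)]; linarith
    have hKr : (K : ℝ) * r = M / 2 := by rw [hrdef]; field_simp
    have h1 := key r hr0 hr1 hKr.le
    have hKn : (0:ℝ) < (K : ℝ) ^ n := by positivity
    have h4n : (0:ℝ) < (4:ℝ) ^ n := by positivity
    have h2 : M ^ (n + 1) ≤ A * I * (K : ℝ) ^ n := by
      rw [hA, div_mul_eq_mul_div, div_mul_eq_mul_div, le_div_iff₀ hc0pos]
      have he : r / 2 = M / (4 * K) := by rw [hrdef]; ring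
      rw [he, div_pow, mul_pow] at h1
      have := mul_le_mul_of_nonneg_right h1
        (by positivity : (0:ℝ) ≤ 2 * ((4:ℝ) ^ n * (K : ℝ) ^ n))
      have he2 : M / 2 * (M ^ n / ((4:ℝ) ^ n * (K:ℝ) ^ n) * c0) * (2 * ((4:ℝ) ^ n * (K:ℝ) ^ n))
          = M ^ (n + 1) * c0 := by
        rw [pow_succ]; field_simp
      rw [he2] at this
      calc M ^ (n + 1) * c0 ≤ I * (2 * ((4:ℝ) ^ n * (K:ℝ) ^ n)) := this
        _ = 2 * 4 ^ n * I * (K:ℝ) ^ n := by ring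
    have hnp : (0:ℝ) < (n : ℝ) + 1 := by positivity
    have hMle : M ≤ (A * I * (K : ℝ) ^ n) ^ ((1:ℝ)/((n:ℝ)+1)) := by
      have h3 : M = (M ^ (n + 1)) ^ ((1:ℝ)/((n:ℝ)+1)) := by
        rw [← Real.rpow_natCast M (n + 1), ← Real.rpow_mul hM0]
        push_cast
        rw [mul_one_div, div_self hnp.ne', Real.rpow_one]
      rw [h3]
      exact Real.rpow_le_rpow (by positivity) h2 (by positivity)
    have hsplit : (A * I * (K : ℝ) ^ n) ^ ((1:ℝ)/((n:ℝ)+1))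
        = A ^ ((1:ℝ)/((n:ℝ)+1)) * (I ^ ((1:ℝ)/((n:ℝ)+1)) * (K : ℝ) ^ ((n:ℝ)/((n:ℝ)+1))) := by
      rw [Real.mul_rpow (by positivity) (by positivity), Real.mul_rpow hApos.le hI0, mul_assoc]
      congr 1
      congr 1
      rw [← Real.rpow_natCast (K : ℝ) n, ← Real.rpow_mul K.coe_nonneg, mul_one_div]
    calc M ≤ (A * I * (K : ℝ) ^ n) ^ ((1:ℝ)/((n:ℝ)+1)) := hMle
      _ = A ^ ((1:ℝ)/((n:ℝ)+1)) * (I ^ ((1:ℝ)/((n:ℝ)+1)) * (K : ℝ) ^ ((n:ℝ)/((n:ℝ)+1))) := hsplit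
      _ ≤ max A (A ^ ((1:ℝ)/(n+1))) * max (I ^ ((1:ℝ)/(n+1)) * (K : ℝ) ^ ((n:ℝ)/(n+1))) I := by
          exact mul_le_mul (le_max_right _ _) (le_max_left _ _) (by positivity) hCmax.le
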